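/- arXiv:1304.5779 — 2 statements merged into one kernel-verified Lean document; each statement's English description precedes it below -/
import Mathlib

section
/- Let G, H, K be groups and f : G × H → K a bilinear map (meaning f(g,·) and f(·,h) are group homomorphisms for all g, h). Then any two elements in the image of f commute. -/
lemma stmt_3_aux (G H K : Type*) [Group G] [Group H] [Group K]
    (f : G → H → K)
    (hleft : ∀ g g' h, f (g * g') h = f g h * f g' h)
    (hright : ∀ g h h', f g (h * h') = f g h * f g h') :
    ∀ g g' : G, ∀ h h' : H, Commute (f g' h) (f g h') := by
  intro g g' h h'
  have key : f g h * (f g' h * (f g h' * f g' h'))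
      = f g h * (f g h' * (f g' h * f g' h')) := by
    calc f g h * (f g' h * (f g h' * f g' h'))
        = f (g * g') h * f (g * g') h' := by rw [hleft, hleft]; group
      _ = f (g * g') (h * h') := by rw [hright]
      _ = f g (h * h') * f g' (h * h') := hleft ..
      _ = f g h * (f g h' * (f g' h * f g' h')) := by rw [hright, hright]; group
  have h2 := mul_left_cancel key
  rw [← mul_assoc, ← mul_assoc] at h2
  exact mul_right_cancel h2

theorem stmt_3 (G H K : Type*) [Group G] [Group H] [Group K]
    (f : G → H → K)
    (hleft : ∀ g g' h, f (g * g') h = f g h * f g' h)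
    (hright : ∀ g h h', f g (h * h') = f g h * f g h') :
    ∀ g g' : G, ∀ h h' : H, Commute (f g h) (f g' h') := fun g g' h h' =>
  stmt_3_aux G H K f hleft hright g' g h h'
end

section
/- Let p be a prime, A and B finite abelian p-groups, C an abelian group, and f : A × B → C a non-degenerate bilinear map. Then the exponents of A and B are equal. -/
theorem stmt_8 (p : ℕ) (hp : p.Prime)
    (A B C : Type*) [AddCommGroup A] [AddCommGroup B] [AddCommGroup C]
    [Finite A] [Finite B]
    (hpA : ∀ a : A, ∃ n : ℕ, p ^ n • a = 0)
    (hpB : ∀ b : B, ∃ n : ℕ, p ^ n • b = 0)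
    (f : A → B → C)
    (hleft : ∀ a a' b, f (a + a') b = f a b + f a' b)
    (hright : ∀ a b b', f a (b + b') = f a b + f a b')
    (hndl : ∀ a : A, (∀ b : B, f a b = 0) → a = 0)
    (hndr : ∀ b : B, (∀ a : A, f a b = 0) → b = 0) :
    AddMonoid.exponent A = AddMonoid.exponent B := by
  have hz_left : ∀ b, f 0 b = 0 := by
    intro b
    have := hleft 0 0 b
    simpa using this.symm
  have hz_right : ∀ a, f a 0 = 0 := by
    intro a
    have := hright a 0 0
    simpa using this.symm
  have hsmul_left : ∀ (n : ℕ) a b, f (n • a) b = n • f a b := by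
    intro n a b
    induction n with
    | zero => simpa using hz_left b
    | succ k ih => rw [succ_nsmul, hleft, ih, succ_nsmul]
  have hsmul_right : ∀ (n : ℕ) a b, f a (n • b) = n • f a b := by
    intro n a b
    induction n with
    | zero => simpa using hz_right a
    | succ k ih => rw [succ_nsmul, hright, ih, succ_nsmul]
  apply Nat.dvd_antisymm
  · rw [AddMonoid.exponent_dvd_iff_forall_nsmul_eq_zero]
    intro a
    apply hndl
    intro b
    rw [hsmul_left, ← hsmul_right, AddMonoid.exponent_nsmul_eq_zero, hz_right]
  · rw [AddMonoid.exponent_dvd_iff_forall_nsmul_eq_zero]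
    intro b
    apply hndr
    intro a
    rw [hsmul_right, ← hsmul_left, AddMonoid.exponent_nsmul_eq_zero, hz_left]
end
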